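/- arXiv:2111.08445 — 2 statements merged into one kernel-verified Lean document; each statement's English description precedes it below -/
import Mathlib

section
/- Let J ∈ ℝ^{(N·n_o)×(N·n_i)} be a block matrix whose N×N blocks J^{lm} are all Toeplitz, and let e ∈ ℝ^{N·n_o}. For each sign matrix a ∈ {−1,1}^{n_i×n_o} define the gradient estimate ĝ_a = −2·𝒯^{n_i} A_a J A_a 𝒯^{n_o} e, where A_a = a ⊗ I_N and 𝒯^{k} = I_k ⊗ 𝒯. Then the estimate is unbiased: the average 2^{−n_i·n_o} · Σ_{a ∈ {−1,1}^{n_i×n_o}} ĝ_a equals the exact gradient −2·Jᵀe. Equivalently, if the entries of a are independent symmetric Bernoulli ±1 random variables, E[ĝ_a] = −2Jᵀe. (This is Lemma 3 of the paper.) -/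
open Matrix Kronecker

/-- The `N × N` time-reversal (anti-diagonal) permutation matrix. -/
def timeRev (N : ℕ) : Matrix (Fin N) (Fin N) ℝ :=
  Matrix.of fun i j => if (i : ℕ) + (j : ℕ) + 1 = N then (1 : ℝ) else 0

section Aux

lemma sgn_cases (x : ({-1, 1} : Finset ℝ)) : (x : ℝ) = -1 ∨ (x : ℝ) = 1 := by
  have := x.2; rw [Finset.mem_insert, Finset.mem_singleton] at this; exact this

def sgnNeg : ({-1, 1} : Finset ℝ) ≃ ({-1, 1} : Finset ℝ) where
  toFun x := ⟨-(x : ℝ), by rcases sgn_cases x with h | h <;> simp [h]⟩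
  invFun x := ⟨-(x : ℝ), by rcases sgn_cases x with h | h <;> simp [h]⟩
  left_inv x := by ext; simp
  right_inv x := by ext; simp

lemma sgnNeg_val (x : ({-1, 1} : Finset ℝ)) : (sgnNeg x : ℝ) = -(x : ℝ) := rfl

lemma sum_sgn_mul (ni no : ℕ) (m l'' : Fin ni) (l m' : Fin no) :
    ∑ a : Fin ni → Fin no → ({-1, 1} : Finset ℝ), ((a m l : ℝ) * (a l'' m' : ℝ)) =
    if m = l'' ∧ l = m' then (2 : ℝ) ^ (ni * no) else 0 := by
  by_cases h : m = l'' ∧ l = m'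
  · obtain ⟨rfl, rfl⟩ := h
    simp only [if_pos (⟨rfl, rfl⟩ : m = m ∧ l = l)]
    have h1 : ∀ a : Fin ni → Fin no → ({-1, 1} : Finset ℝ),
        ((a m l : ℝ) * (a m l : ℝ)) = 1 := by
      intro a; rcases sgn_cases (a m l) with h | h <;> rw [h] <;> norm_num
    rw [Finset.sum_congr rfl fun a _ => h1 a, Finset.sum_const, Finset.card_univ,
      nsmul_eq_mul, mul_one]
    have hcard : Fintype.card (Fin ni → Fin no → ({-1, 1} : Finset ℝ)) = 2 ^ (ni * no) := by
      have h2 : ({-1, 1} : Finset ℝ).card = 2 := by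
        rw [Finset.card_insert_of_notMem (by norm_num), Finset.card_singleton]
      simp [Fintype.card_fun, Fintype.card_coe, h2, ← pow_mul, Nat.mul_comm]
    rw [hcard]; push_cast; simp
  · rw [if_neg h]
    set flip : (Fin ni → Fin no → ({-1, 1} : Finset ℝ)) ≃
        (Fin ni → Fin no → ({-1, 1} : Finset ℝ)) :=
      { toFun := fun a => Function.update a m (Function.update (a m) l (sgnNeg (a m l)))
        invFun := fun a => Function.update a m (Function.update (a m) l (sgnNeg (a m l)))
        left_inv := by
          intro a; funext i j
          by_cases hi : i = m
          · subst hi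
            by_cases hj : j = l
            · subst hj; simp [Function.update_self]; ext; simp [sgnNeg]
            · simp [Function.update_self, Function.update_of_ne hj]
          · simp [Function.update_of_ne hi]
        right_inv := by
          intro a; funext i j
          by_cases hi : i = m
          · subst hi
            by_cases hj : j = l
            · subst hj; simp [Function.update_self]; ext; simp [sgnNeg]
            · simp [Function.update_self, Function.update_of_ne hj]
          · simp [Function.update_of_ne hi] } with hflip
    have key : ∀ a, ((flip a m l : ℝ) * (flip a l'' m' : ℝ)) = -((a m l : ℝ) * (a l'' m' : ℝ)) := by
      intro a
      have h1 : (flip a m l : ℝ) = -(a m l : ℝ) := by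
        simp [hflip, Function.update_self, sgnNeg_val]
      have h2 : (flip a l'' m' : ℝ) = (a l'' m' : ℝ) := by
        by_cases hm : l'' = m
        · subst hm
          have hl : m' ≠ l := fun hc => h ⟨rfl, hc.symm⟩
          simp [hflip, Function.update_self, Function.update_of_ne hl]
        · simp [hflip, Function.update_of_ne hm]
      rw [h1, h2]; ring
    have := Equiv.sum_comp flip (fun a => ((a m l : ℝ) * (a l'' m' : ℝ)))
    simp only [key] at this
    rw [Finset.sum_neg_distrib] at this
    linarith

lemma rev_cond {N : ℕ} (i i' : Fin N) : ((i : ℕ) + (i' : ℕ) + 1 = N) ↔ i' = i.rev := by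
  rw [Fin.ext_iff, Fin.val_rev]
  have := i.isLt; have := i'.isLt
  omega

lemma kron_timeRev_mul {k N : ℕ} {β : Type*} [Fintype β]
    (P : Matrix (Fin k × Fin N) β ℝ) (m : Fin k) (i : Fin N) (y : β) :
    (((1 : Matrix (Fin k) (Fin k) ℝ) ⊗ₖ timeRev N) * P) (m, i) y = P (m, i.rev) y := by
  rw [Matrix.mul_apply, Fintype.sum_prod_type]
  simp [kroneckerMap_apply, Matrix.one_apply, timeRev, rev_cond, ite_mul, mul_ite,
    Finset.sum_ite_eq, Finset.sum_ite_eq']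

lemma mul_kron_timeRev {k N : ℕ} {β : Type*} [Fintype β]
    (P : Matrix β (Fin k × Fin N) ℝ) (m : Fin k) (j : Fin N) (y : β) :
    (P * ((1 : Matrix (Fin k) (Fin k) ℝ) ⊗ₖ timeRev N)) y (m, j) = P y (m, j.rev) := by
  rw [Matrix.mul_apply, Fintype.sum_prod_type]
  have hc : ∀ j' : Fin N, ((j' : ℕ) + (j : ℕ) + 1 = N) ↔ j' = j.rev := by
    intro j'; rw [Fin.ext_iff, Fin.val_rev]
    have := j.isLt; have := j'.isLt; omega
  simp [kroneckerMap_apply, Matrix.one_apply, timeRev, hc, ite_mul, mul_ite,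
    Finset.sum_ite_eq, Finset.sum_ite_eq']

lemma kronA_mul {ni no N : ℕ} {β : Type*} [Fintype β]
    (A : Matrix (Fin ni) (Fin no) ℝ) (Q : Matrix (Fin no × Fin N) β ℝ)
    (m : Fin ni) (i : Fin N) (y : β) :
    ((A ⊗ₖ (1 : Matrix (Fin N) (Fin N) ℝ)) * Q) (m, i) y = ∑ l, A m l * Q (l, i) y := by
  rw [Matrix.mul_apply, Fintype.sum_prod_type]
  simp [kroneckerMap_apply, Matrix.one_apply, ite_mul, mul_ite, mul_assoc,
    Finset.sum_ite_eq, Finset.sum_ite_eq']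

lemma mul_kronA {ni no N : ℕ} {β : Type*} [Fintype β]
    (A : Matrix (Fin ni) (Fin no) ℝ) (Q : Matrix β (Fin ni × Fin N) ℝ)
    (m' : Fin no) (j : Fin N) (y : β) :
    (Q * (A ⊗ₖ (1 : Matrix (Fin N) (Fin N) ℝ))) y (m', j) = ∑ l, Q y (l, j) * A l m' := by
  rw [Matrix.mul_apply, Fintype.sum_prod_type]
  simp [kroneckerMap_apply, Matrix.one_apply, ite_mul, mul_ite, mul_comm, mul_assoc,
    Finset.sum_ite_eq, Finset.sum_ite_eq']

end Aux

/-- **Lemma 3 (unbiased gradient estimate).** Let `J` be a block matrix with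
`N × N` Toeplitz blocks `J^{lm}` and `e ∈ ℝ^{N n_o}`. For each sign matrix
`a ∈ {-1,1}^{n_i × n_o}` let `ĝ_a = -2 𝒯^{n_i} A_a J A_a 𝒯^{n_o} e`,
with `A_a = a ⊗ I_N` and `𝒯^k = I_k ⊗ 𝒯`. Then the average of `ĝ_a` over
all `2^{n_i n_o}` sign matrices equals the exact gradient `-2 Jᵀ e`;
equivalently, for i.i.d. symmetric Bernoulli `±1` entries, `E[ĝ_a] = -2Jᵀe`. -/
theorem unbiased_gradient_estimate (N ni no : ℕ)
    (J : Matrix (Fin no × Fin N) (Fin ni × Fin N) ℝ)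
    (hJ : ∀ (l : Fin no) (m : Fin ni), ∀ i j k l' : Fin N,
      (i : ℤ) - (j : ℤ) = (k : ℤ) - (l' : ℤ) → J (l, i) (m, j) = J (l, k) (m, l'))
    (e : Fin no × Fin N → ℝ) :
    ((2 : ℝ) ^ (ni * no))⁻¹ •
      ∑ a : Fin ni → Fin no → ({-1, 1} : Finset ℝ),
        ((-2 : ℝ) •
          ((((1 : Matrix (Fin ni) (Fin ni) ℝ) ⊗ₖ timeRev N) *
            ((Matrix.of fun l m => (a l m : ℝ)) ⊗ₖ (1 : Matrix (Fin N) (Fin N) ℝ)) *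
            J *
            ((Matrix.of fun l m => (a l m : ℝ)) ⊗ₖ (1 : Matrix (Fin N) (Fin N) ℝ)) *
            ((1 : Matrix (Fin no) (Fin no) ℝ) ⊗ₖ timeRev N)) *ᵥ e)) =
      (-2 : ℝ) • (Jᵀ *ᵥ e) := by
  have h2k : ((2 : ℝ) ^ (ni * no)) ≠ 0 := by positivity
  funext x
  obtain ⟨m, i⟩ := x
  -- entrywise formula for the big matrix product
  have hMa : ∀ (a : Fin ni → Fin no → ({-1, 1} : Finset ℝ)) (m' : Fin no) (j : Fin N),
      ((((1 : Matrix (Fin ni) (Fin ni) ℝ) ⊗ₖ timeRev N) *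
        ((Matrix.of fun l m => (a l m : ℝ)) ⊗ₖ (1 : Matrix (Fin N) (Fin N) ℝ)) *
        J *
        ((Matrix.of fun l m => (a l m : ℝ)) ⊗ₖ (1 : Matrix (Fin N) (Fin N) ℝ)) *
        ((1 : Matrix (Fin no) (Fin no) ℝ) ⊗ₖ timeRev N)) (m, i) (m', j))
      = ∑ l : Fin no, ∑ l'' : Fin ni,
          J (l, i.rev) (l'', j.rev) * ((a m l : ℝ) * (a l'' m' : ℝ)) := by
    intro a m' j
    simp only [Matrix.mul_assoc]
    rw [kron_timeRev_mul, kronA_mul]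
    refine Finset.sum_congr rfl fun l _ => ?_
    rw [← Matrix.mul_assoc, mul_kron_timeRev, mul_kronA, Finset.mul_sum]
    refine Finset.sum_congr rfl fun l'' _ => ?_
    simp only [Matrix.of_apply]
    ring
  -- averaging over sign matrices
  have hMsum : ∀ (m' : Fin no) (j : Fin N),
      (∑ a : Fin ni → Fin no → ({-1, 1} : Finset ℝ),
        ((((1 : Matrix (Fin ni) (Fin ni) ℝ) ⊗ₖ timeRev N) *
          ((Matrix.of fun l m => (a l m : ℝ)) ⊗ₖ (1 : Matrix (Fin N) (Fin N) ℝ)) *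
          J *
          ((Matrix.of fun l m => (a l m : ℝ)) ⊗ₖ (1 : Matrix (Fin N) (Fin N) ℝ)) *
          ((1 : Matrix (Fin no) (Fin no) ℝ) ⊗ₖ timeRev N)) (m, i) (m', j)))
      = (2 : ℝ) ^ (ni * no) * J (m', j) (m, i) := by
    intro m' j
    rw [Finset.sum_congr rfl fun a _ => hMa a m' j]
    rw [Finset.sum_comm]
    have hswap : ∀ l : Fin no,
        (∑ a : Fin ni → Fin no → ({-1, 1} : Finset ℝ), ∑ l'' : Fin ni,
          J (l, i.rev) (l'', j.rev) * ((a m l : ℝ) * (a l'' m' : ℝ)))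
        = ∑ l'' : Fin ni, J (l, i.rev) (l'', j.rev) *
            (if m = l'' ∧ l = m' then (2 : ℝ) ^ (ni * no) else 0) := by
      intro l
      rw [Finset.sum_comm]
      refine Finset.sum_congr rfl fun l'' _ => ?_
      rw [← Finset.mul_sum, sum_sgn_mul]
    rw [Finset.sum_congr rfl fun l _ => hswap l]
    have hJrev : J (m', i.rev) (m, j.rev) = J (m', j) (m, i) := by
      refine hJ m' m i.rev j.rev j i ?_
      have := i.isLt; have := j.isLt
      simp only [Fin.val_rev]
      omega
    simp only [mul_ite, mul_zero, ite_and]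
    rw [Finset.sum_congr rfl fun l _ => Finset.sum_ite_eq Finset.univ m
      (fun l'' => if l = m' then J (l, i.rev) (l'', j.rev) * (2 : ℝ) ^ (ni * no) else 0)]
    simp [Finset.sum_ite_eq', hJrev, mul_comm]
  -- put everything together
  simp only [Pi.smul_apply, Finset.sum_apply, smul_eq_mul, Matrix.mulVec, dotProduct]
  rw [← Finset.mul_sum, Finset.sum_comm]
  have hcol : ∀ y : Fin no × Fin N,
      (∑ a : Fin ni → Fin no → ({-1, 1} : Finset ℝ),
        ((((1 : Matrix (Fin ni) (Fin ni) ℝ) ⊗ₖ timeRev N) *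
          ((Matrix.of fun l m => (a l m : ℝ)) ⊗ₖ (1 : Matrix (Fin N) (Fin N) ℝ)) *
          J *
          ((Matrix.of fun l m => (a l m : ℝ)) ⊗ₖ (1 : Matrix (Fin N) (Fin N) ℝ)) *
          ((1 : Matrix (Fin no) (Fin no) ℝ) ⊗ₖ timeRev N)) (m, i) y) * e y)
      = (2 : ℝ) ^ (ni * no) * (Jᵀ (m, i) y * e y) := by
    intro ⟨m', j⟩
    rw [← Finset.sum_mul, hMsum m' j, Matrix.transpose_apply]
    ring
  rw [Finset.sum_congr rfl fun y _ => hcol y, ← Finset.mul_sum]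
  field_simp
end

section
/- Let J be a real M×n matrix, r ∈ ℝ^M, f ∈ ℝ^n, e = r − Jf, and let g, p_prev ∈ ℝ^n and τ ∈ ℝ. Assume f is optimal along the previous search direction, i.e. eᵀ(J p_prev) = 0, and let the new direction p = g + τ·p_prev be JᵀJ-conjugate to p_prev, i.e. pᵀ(JᵀJ)p_prev = 0. Then for every step size ε ∈ ℝ, ‖r − J(f + ε·g)‖₂² = ‖r − J(f + ε·p)‖₂² + ε²τ²·(J p_prev)ᵀ(J p_prev) ≥ ‖r − J(f + ε·p)‖₂²; in particular, the minimum of the cost along the conjugate direction p is at most the minimum of the cost along the steepest-descent direction g. -/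
open Matrix

/-- The conjugate gradient update is at least as good as steepest descent:
if `f` is optimal along the previous direction (`eᵀ(J p_prev) = 0`) and the
new direction `p = g + τ • p_prev` is `JᵀJ`-conjugate to `p_prev`, then for
every step size `ε`,
`‖r - J(f + ε•g)‖₂² = ‖r - J(f + ε•p)‖₂² + ε²τ² (J p_prev)ᵀ(J p_prev)
 ≥ ‖r - J(f + ε•p)‖₂²`. -/
theorem conjugate_at_least_steepest (M n : ℕ) (J : Matrix (Fin M) (Fin n) ℝ)
    (r : Fin M → ℝ) (f : Fin n → ℝ) (e : Fin M → ℝ) (he : e = r - J *ᵥ f)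
    (g pprev p : Fin n → ℝ) (τ : ℝ)
    (hopt : e ⬝ᵥ (J *ᵥ pprev) = 0)
    (hpdef : p = g + τ • pprev)
    (hconj : p ⬝ᵥ ((Jᵀ * J) *ᵥ pprev) = 0) :
    ∀ ε : ℝ,
      (r - J *ᵥ (f + ε • g)) ⬝ᵥ (r - J *ᵥ (f + ε • g)) =
        (r - J *ᵥ (f + ε • p)) ⬝ᵥ (r - J *ᵥ (f + ε • p)) +
          ε ^ 2 * τ ^ 2 * ((J *ᵥ pprev) ⬝ᵥ (J *ᵥ pprev)) ∧
      (r - J *ᵥ (f + ε • p)) ⬝ᵥ (r - J *ᵥ (f + ε • p)) ≤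
        (r - J *ᵥ (f + ε • g)) ⬝ᵥ (r - J *ᵥ (f + ε • g)) := by
  intro ε
  have hrf : r - J *ᵥ f = e := he.symm
  have hconj' : (J *ᵥ p) ⬝ᵥ (J *ᵥ pprev) = 0 := by
    rw [← mulVec_mulVec, dotProduct_mulVec, vecMul_transpose] at hconj
    exact hconj
  subst hpdef
  have key :
      (r - J *ᵥ (f + ε • g)) ⬝ᵥ (r - J *ᵥ (f + ε • g)) =
        (r - J *ᵥ (f + ε • (g + τ • pprev))) ⬝ᵥ (r - J *ᵥ (f + ε • (g + τ • pprev))) +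
          ε ^ 2 * τ ^ 2 * ((J *ᵥ pprev) ⬝ᵥ (J *ᵥ pprev)) := by
    simp only [mulVec_add, mulVec_smul, smul_add, smul_smul] at *
    simp only [sub_add_eq_sub_sub, ← he] at *
    simp only [dotProduct_sub, sub_dotProduct, dotProduct_smul, smul_dotProduct,
      smul_eq_mul, dotProduct_add, add_dotProduct] at *
    have c1 : (J *ᵥ g) ⬝ᵥ e = e ⬝ᵥ (J *ᵥ g) := dotProduct_comm _ _
    have c2 : (J *ᵥ pprev) ⬝ᵥ e = e ⬝ᵥ (J *ᵥ pprev) := dotProduct_comm _ _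
    have c3 : (J *ᵥ pprev) ⬝ᵥ (J *ᵥ g) = (J *ᵥ g) ⬝ᵥ (J *ᵥ pprev) := dotProduct_comm _ _
    linear_combination 2 * ε * τ * hopt + ε * τ * c2 - ε ^ 2 * τ * c3 -
      2 * ε ^ 2 * τ * hconj'
  refine ⟨key, ?_⟩
  rw [key]
  have : 0 ≤ ε ^ 2 * τ ^ 2 * ((J *ᵥ pprev) ⬝ᵥ (J *ᵥ pprev)) := by
    apply mul_nonneg (by positivity)
    exact Finset.sum_nonneg fun i _ => mul_self_nonneg _
  linarith
end
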